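/- arXiv:1206.1127 — 5 statements merged into one kernel-verified Lean document; each statement's English description precedes it below -/
import Mathlib

section
/- Let G be a profinite group, H an open subgroup of G, and Σ₁,…,Σₖ ⊆ H measurable sets that are independent with respect to the probability Haar measure μ_H on H. Let S ⊆ G be a set of representatives of the left cosets G/H, and set Σᵢ* = ⋃_{g∈S} gΣᵢ. Then Σ₁*,…,Σₖ* are independent with respect to the probability Haar measure μ_G on G, and moreover μ_G(Σᵢ*) = μ_H(Σᵢ) for each i. -/
/-!
Writing `g = s * h` with `s ∈ S` and `h ∈ H` identifies `G` with `S × H`, and `Σᵢ*` is the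
preimage of `Σᵢ` under the projection `g ↦ h`. Since `S` is finite and the translates `s • H`
are disjoint, the pushforward of `μG` along this projection is `|S|` times the restriction of
`μG` to `H`, a left-invariant probability measure on the compact group `H`; by uniqueness of
Haar measure it is `μH`. Preimages commute with intersections, so independence transfers.
-/

open MeasureTheory Measure Set
open scoped ENNReal

namespace Subgroup.IsComplement

variable {G : Type*} [Group G] {S : Set G}

theorem equiv_mul {T : Set G} (hST : IsComplement S T) {s t : G} (hs : s ∈ S) (ht : t ∈ T) :
    hST.equiv (s * t) = (⟨s, hs⟩, ⟨t, ht⟩) :=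
  hST.equiv.apply_symm_apply (⟨s, hs⟩, ⟨t, ht⟩)

variable {H : Subgroup G}

theorem pairwiseDisjoint_image_mul (hSH : IsComplement S H) (B : Set H) :
    S.PairwiseDisjoint fun s => (s * ·) '' (Subtype.val '' B) := by
  rintro s hs s' hs' hne
  refine disjoint_left.2 ?_
  rintro _ ⟨_, ⟨h, -, rfl⟩, rfl⟩ ⟨_, ⟨h', -, rfl⟩, hmul⟩
  have heq := hSH.equiv_mul hs h.2
  simp only at hmul
  rw [← hmul, hSH.equiv_mul hs' h'.2] at heq
  exact hne (congrArg (·.1.1) heq).symm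

noncomputable def equivSnd (hSH : IsComplement S H) (g : G) : H :=
  (hSH.equiv g).2

theorem preimage_equivSnd (hSH : IsComplement S H) (B : Set H) :
    hSH.equivSnd ⁻¹' B = ⋃ s ∈ S, (s * ·) '' (Subtype.val '' B) := by
  ext g
  simp only [mem_preimage, mem_iUnion, mem_image, exists_prop]
  constructor
  · intro hg
    exact ⟨_, (hSH.equiv g).1.2, _, ⟨_, hg, rfl⟩, hSH.equiv_fst_mul_equiv_snd g⟩
  · rintro ⟨s, hs, _, ⟨h, hh, rfl⟩, rfl⟩
    rwa [equivSnd, hSH.equiv_mul hs h.2]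

end Subgroup.IsComplement

section CompactGroup

variable {G : Type*} [Group G] [TopologicalSpace G] [IsTopologicalGroup G] [CompactSpace G]
  {H : Subgroup G} {S : Set G}

theorem Subgroup.IsComplement.finite_left_of_isOpen (hH : IsOpen (H : Set G))
    (hSH : IsComplement S H) : S.Finite :=
  have := H.quotient_finite_of_isOpen hH
  have : H.FiniteIndex := finiteIndex_of_finite_quotient
  hSH.finite_left

variable [MeasurableSpace G] [BorelSpace G]

theorem MeasureTheory.Measure.eq_of_isMulLeftInvariant_of_compactSpace (μ' μ : Measure G)
    [IsMulLeftInvariant μ'] [IsProbabilityMeasure μ'] [IsHaarMeasure μ] [IsProbabilityMeasure μ] :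
    μ' = μ := by
  have h := isMulInvariant_eq_smul_of_compactSpace μ' μ
  have hone : haarScalarFactor μ' μ = 1 := by
    simpa using (congrArg (· univ) h).symm
  rw [h, hone, one_smul]

variable [MeasurableSpace H] [BorelSpace H]

theorem Subgroup.IsComplement.measurable_equivSnd (hH : IsOpen (H : Set G))
    (hSH : IsComplement S H) : Measurable hSH.equivSnd := fun B hB => by
  rw [hSH.preimage_equivSnd]
  exact .biUnion (hSH.finite_left_of_isOpen hH).countable fun s _ =>
    (hH.isOpenEmbedding_subtypeVal.measurableEmbedding.measurableSet_image.2 hB).const_smul s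

theorem Subgroup.IsComplement.measure_preimage_equivSnd (hH : IsOpen (H : Set G))
    (hSH : IsComplement S H) (μ : Measure G) [IsMulLeftInvariant μ] {B : Set H}
    (hB : MeasurableSet B) :
    μ (hSH.equivSnd ⁻¹' B) = ENat.card S * μ.comap Subtype.val B := by
  have hval : MeasurableEmbedding (Subtype.val : H → G) :=
    hH.isOpenEmbedding_subtypeVal.measurableEmbedding
  rw [hSH.preimage_equivSnd, measure_biUnion (hSH.finite_left_of_isOpen hH).countable
    (hSH.pairwiseDisjoint_image_mul B), hval.comap_apply, ← ENNReal.tsum_const]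
  · exact tsum_congr fun s => measure_smul μ (s : G) _
  · exact fun s _ => (hval.measurableSet_image.2 hB).const_smul s

theorem Subgroup.IsComplement.map_equivSnd_eq (hH : IsOpen (H : Set G))
    (hSH : IsComplement S H) (μG : Measure G) [IsHaarMeasure μG] [IsProbabilityMeasure μG]
    (μH : Measure H) [IsHaarMeasure μH] [IsProbabilityMeasure μH] :
    μG.map hSH.equivSnd = μH := by
  have hmeas := hSH.measurable_equivSnd hH
  have hmap : μG.map hSH.equivSnd = (ENat.card S : ℝ≥0∞) • μG.comap (Subtype.val : H → G) := by
    ext B hB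
    rw [map_apply hmeas hB, hSH.measure_preimage_equivSnd hH μG hB, Measure.smul_apply,
      smul_eq_mul]
  have : IsMulLeftInvariant (μG.comap (Subtype.val : H → G)) :=
    IsMulLeftInvariant.comap μG (f := H.subtype) hH.isOpenEmbedding_subtypeVal.measurableEmbedding
  have : IsMulLeftInvariant (μG.map hSH.equivSnd) := hmap ▸ inferInstance
  have := isProbabilityMeasure_map (μ := μG) hmeas.aemeasurable
  have : CompactSpace H := isCompact_iff_compactSpace.mp (H.isClosed_of_isOpen hH).isCompact
  exact eq_of_isMulLeftInvariant_of_compactSpace _ _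

end CompactGroup

theorem haar_independence_of_translates_general
    (G : Type*) [Group G] [TopologicalSpace G] [IsTopologicalGroup G]
    [CompactSpace G]
    [MeasurableSpace G] [BorelSpace G]
    (H : Subgroup G) (hHopen : IsOpen (H : Set G))
    [MeasurableSpace ↥H] [BorelSpace ↥H]
    (μG : Measure G) [μG.IsHaarMeasure] [IsProbabilityMeasure μG]
    (μH : Measure ↥H) [μH.IsHaarMeasure] [IsProbabilityMeasure μH]
    (k : ℕ) (Sig : Fin k → Set ↥H) (hmeas : ∀ i, MeasurableSet (Sig i))
    (hindep : ∀ t : Finset (Fin k), μH (⋂ i ∈ t, Sig i) = ∏ i ∈ t, μH (Sig i))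
    (S : Set G) (hS : ∀ g : G, ∃! s, s ∈ S ∧ s⁻¹ * g ∈ H) :
    (∀ t : Finset (Fin k),
        μG (⋂ i ∈ t, ⋃ s ∈ S, (s * ·) '' (Subtype.val '' Sig i)) =
          ∏ i ∈ t, μG (⋃ s ∈ S, (s * ·) '' (Subtype.val '' Sig i))) ∧
      ∀ i, μG (⋃ s ∈ S, (s * ·) '' (Subtype.val '' Sig i)) = μH (Sig i) := by
  have hSH : Subgroup.IsComplement S H :=
    Subgroup.isComplement_iff_existsUnique_inv_mul_mem.2 fun g => by
      obtain ⟨s, ⟨hs, hsg⟩, huniq⟩ := hS g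
      exact ⟨⟨s, hs⟩, hsg, fun s' hs' => Subtype.ext (huniq s' ⟨s'.2, hs'⟩)⟩
  have hpreimage : ∀ B, MeasurableSet B → μG (hSH.equivSnd ⁻¹' B) = μH B := fun B hB => by
    rw [← map_apply (hSH.measurable_equivSnd hHopen) hB, hSH.map_equivSnd_eq hHopen μG μH]
  simp only [← hSH.preimage_equivSnd, ← preimage_iInter₂]
  refine ⟨fun t => ?_, fun i => hpreimage _ (hmeas i)⟩
  rw [hpreimage _ (Finset.measurableSet_biInter _ fun i _ => hmeas i), hindep t]
  exact Finset.prod_congr rfl fun i _ => (hpreimage _ (hmeas i)).symm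

/-- Let `G` be a profinite group, `H ≤ G` an open subgroup, `Σ₁,…,Σₖ ⊆ H` measurable
sets that are independent for the probability Haar measure `μH` of `H`, and `S ⊆ G` a set
of representatives of the left cosets `G/H`. Then the sets `Σᵢ* = ⋃_{g ∈ S} gΣᵢ` are
independent for the probability Haar measure `μG` of `G`, and `μG(Σᵢ*) = μH(Σᵢ)`. -/
theorem haar_independence_of_translates
    (G : Type*) [Group G] [TopologicalSpace G] [IsTopologicalGroup G]
    [CompactSpace G] [TotallyDisconnectedSpace G] [T2Space G]
    [MeasurableSpace G] [BorelSpace G]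
    (H : Subgroup G) (hHopen : IsOpen (H : Set G))
    [MeasurableSpace ↥H] [BorelSpace ↥H]
    (μG : Measure G) [μG.IsHaarMeasure] [IsProbabilityMeasure μG]
    (μH : Measure ↥H) [μH.IsHaarMeasure] [IsProbabilityMeasure μH]
    (k : ℕ) (Sig : Fin k → Set ↥H) (hmeas : ∀ i, MeasurableSet (Sig i))
    (hindep : ∀ t : Finset (Fin k), μH (⋂ i ∈ t, Sig i) = ∏ i ∈ t, μH (Sig i))
    (S : Set G) (hS : ∀ g : G, ∃! s, s ∈ S ∧ s⁻¹ * g ∈ H) :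
    (∀ t : Finset (Fin k),
        μG (⋂ i ∈ t, ⋃ s ∈ S, (s * ·) '' (Subtype.val '' Sig i)) =
          ∏ i ∈ t, μG (⋃ s ∈ S, (s * ·) '' (Subtype.val '' Sig i))) ∧
      ∀ i, μG (⋃ s ∈ S, (s * ·) '' (Subtype.val '' Sig i)) = μH (Sig i) :=
  haar_independence_of_translates_general G H hHopen μG μH k Sig hmeas hindep S hS
end

section
/- Let (Mᵢ)_{i∈I} be an infinite family of Galois extensions of a field K inside a fixed algebraic closure, pairwise linearly disjoint over K, and let E/K be a finite Galois extension. Then Mᵢ is linearly disjoint from E over K for all but finitely many i ∈ I. -/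
/-!
A finite separable extension `E/K` has only finitely many intermediate fields. For `i ≠ j` the
fields `Mᵢ ⊓ E` and `Mⱼ ⊓ E` meet inside `Mᵢ ⊓ Mⱼ = K`, so the `Mᵢ ⊓ E` that differ from `K` are
pairwise distinct, and only finitely many `i` have `Mᵢ ⊓ E ≠ K`. For the other `i`, linear
disjointness follows from `Mᵢ ⊓ E = K` because `E/K` is finite Galois: this is known when `Mᵢ/K`
is finite as well, and linear disjointness can be tested on the finite subextensions of `Mᵢ`.
-/

open Function

theorem Pairwise.finite_setOf_not_disjoint {ι α : Type*} [SemilatticeInf α] [OrderBot α]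
    {f : ι → α} (hf : Pairwise (Disjoint on f)) {a : α} (ha : (Set.Iic a).Finite) :
    {i | ¬ Disjoint (f i) a}.Finite := by
  refine Set.Finite.of_finite_image (f := fun i ↦ f i ⊓ a)
    (ha.subset (Set.image_subset_iff.2 fun _ _ ↦ inf_le_right)) ?_
  intro i hi j _ hij
  by_contra hne
  refine hi (disjoint_iff.2 (le_bot_iff.1 ?_))
  calc f i ⊓ a ≤ f i ⊓ f j := le_inf inf_le_left (hij.le.trans inf_le_left)
    _ = ⊥ := disjoint_iff.1 (hf hne)

namespace IntermediateField

variable {F E : Type*} [Field F] [Field E] [Algebra F E]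

theorem finite_Iic (K : IntermediateField F E)
    [FiniteDimensional F K] [Algebra.IsSeparable F K] : (Set.Iic K).Finite := by
  have : Finite (IntermediateField F K) :=
    Field.finite_intermediateField_of_exists_primitive_element F K
      (Field.exists_primitive_element F K)
  exact (Set.finite_range lift).subset fun L hL ↦ ⟨restrict hL, lift_restrict hL⟩

theorem LinearDisjoint.of_inf_eq_bot_of_isAlgebraic {A B : IntermediateField F E}
    [Algebra.IsAlgebraic F A] [FiniteDimensional F B] [IsGalois F B] (h : A ⊓ B = ⊥) :
    A.LinearDisjoint B := by
  rw [linearDisjoint_iff']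
  refine Subalgebra.LinearDisjoint.of_linearDisjoint_finite_left _ _ fun A' hA' _ ↦ ?_
  have hx_alg (x : E) (hx : x ∈ A') : IsAlgebraic F x :=
    (Algebra.IsAlgebraic.isAlgebraic (⟨x, hA' hx⟩ : A)).algHom A.val
  let A'' : IntermediateField F E :=
    A'.toIntermediateField fun x hx ↦ A'.inv_mem_of_algebraic (x := ⟨x, hx⟩) (hx_alg x hx)
  have : FiniteDimensional F A'' := ‹Module.Finite F A'›
  have hA'' : A'' ⊓ B = ⊥ := le_bot_iff.1 (h ▸ inf_le_inf_right B hA')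
  exact linearDisjoint_iff'.1 (of_inf_eq_bot (inf_comm A'' B ▸ hA'')).symm

end IntermediateField

theorem linearDisjoint_cofinite_general (K : Type*) [Field K] (I : Type*)
    (M : I → IntermediateField K (AlgebraicClosure K))
    (hdisj : ∀ i j, i ≠ j → (M i).LinearDisjoint (M j))
    (E : IntermediateField K (AlgebraicClosure K))
    [FiniteDimensional K E] [IsGalois K E] :
    {i : I | ¬ (M i).LinearDisjoint E}.Finite := by
  have hM : Pairwise (Disjoint on M) := fun i j hij ↦ disjoint_iff.2 (hdisj i j hij).inf_eq_bot
  refine (hM.finite_setOf_not_disjoint (IntermediateField.finite_Iic E)).subset fun i hi hME ↦ ?_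
  exact hi (.of_inf_eq_bot_of_isAlgebraic (disjoint_iff.1 hME))

/-- Let `(Mᵢ)_{i ∈ I}` be an infinite family of Galois extensions of `K` inside a fixed
algebraic closure which are pairwise linearly disjoint over `K`, and let `E/K` be a finite
Galois extension. Then `Mᵢ` is linearly disjoint from `E` over `K` for all but finitely
many `i`. -/
theorem linearDisjoint_cofinite (K : Type*) [Field K] (I : Type*) [Infinite I]
    (M : I → IntermediateField K (AlgebraicClosure K))
    (hGal : ∀ i, IsGalois K (M i))
    (hdisj : ∀ i j, i ≠ j → (M i).LinearDisjoint (M j))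
    (E : IntermediateField K (AlgebraicClosure K))
    [FiniteDimensional K E] [IsGalois K E] :
    {i : I | ¬ (M i).LinearDisjoint E}.Finite :=
  linearDisjoint_cofinite_general K I M hdisj E
end

section
/- Let L/K be a Galois extension, d > 1 minimal such that there are infinitely many Galois subextensions of L/K of degree d over K, and suppose there are only finitely many Galois subextensions of L/K of degree less than d. Then there exist a finite Galois subextension K₁ of L/K and an infinite family (Mᵢ) of Galois subextensions of L/K of degree d over K such that Mᵢ ∩ Mⱼ = K₁ for all i ≠ j; consequently the Mᵢ are pairwise linearly disjoint over K₁. -/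
/-!
Two distinct Galois subextensions of degree `d` meet in a Galois subextension of degree `< d`,
and there are only finitely many of those. Take `K₁` maximal among them subject to lying in
infinitely many of the degree-`d` fields. Only finitely many of the degree-`d` fields contain a
subextension strictly larger than `K₁`, so one can pick fields `Mᵢ ⊇ K₁` one at a time, each
meeting all previous ones exactly in `K₁`. Since `Mᵢ / K₁` is Galois, `Mᵢ ∩ Mⱼ = K₁` already
forces linear disjointness over `K₁`.
-/

open Module IntermediateField

namespace Set

variable {α : Type*} [SemilatticeInf α] {F S : Set α}

theorem Infinite.exists_mem_infinite_setOf_le (hF : F.Infinite) (hS : S.Finite)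
    (hFS : F.Pairwise fun a b ↦ a ⊓ b ∈ S) : ∃ k ∈ S, {b ∈ F | k ≤ b}.Infinite := by
  obtain ⟨a, ha⟩ := hF.nonempty
  by_contra! hfin
  refine hF ((hS.biUnion hfin).insert a |>.subset fun b hb ↦ ?_)
  rcases eq_or_ne b a with rfl | hba
  · exact mem_insert b _
  · exact mem_insert_of_mem a (mem_biUnion (hFS ha hb hba.symm) ⟨hb, inf_le_right⟩)

theorem Infinite.exists_seq_pairwise_inf_eq (hF : F.Infinite) (hS : S.Finite)
    (hFS : F.Pairwise fun a b ↦ a ⊓ b ∈ S) :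
    ∃ k ∈ S, ∃ M : ℕ → α, Function.Injective M ∧ (∀ i, M i ∈ F) ∧
      Pairwise fun i j ↦ M i ⊓ M j = k := by
  obtain ⟨k, hk⟩ := (hS.subset fun k hk ↦ hk.1 : {k ∈ S | {b ∈ F | k ≤ b}.Infinite}.Finite)
    |>.exists_maximal (hF.exists_mem_infinite_setOf_le hS hFS)
  have hbad : (⋃ k' ∈ {k' ∈ S | k < k'}, {b ∈ F | k' ≤ b}).Finite :=
    (hS.subset fun _ h ↦ h.1).biUnion fun k' hk' ↦ not_not.1 fun h ↦ hk.not_gt ⟨hk'.1, h⟩ hk'.2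
  have hextend (s : Finset α) (hs : ∀ b ∈ s, b ∈ F ∧ k ≤ b) :
      ∃ c, (c ∈ F ∧ k ≤ c) ∧ ∀ b ∈ s, b ≠ c ∧ b ⊓ c = k := by
    obtain ⟨c, hc, hcs⟩ := (hk.prop.2.sdiff (hbad.union s.finite_toSet)).nonempty
    refine ⟨c, hc, fun b hb ↦ ?_⟩
    have hbc : b ≠ c := fun h ↦ hcs (Or.inr (h ▸ hb))
    refine ⟨hbc, (le_inf (hs b hb).2 hc.2).eq_of_not_lt' fun hlt ↦ hcs (Or.inl ?_)⟩
    exact mem_biUnion ⟨hFS (hs b hb).1 hc.1 hbc, hlt⟩ ⟨hc.1, inf_le_right⟩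
  have : Std.Symm fun b c : α ↦ b ≠ c ∧ b ⊓ c = k := ⟨fun b c h ↦ ⟨h.1.symm, inf_comm b c ▸ h.2⟩⟩
  obtain ⟨M, hMF, hM⟩ := exists_seq_of_forall_finset_exists' _ _ hextend
  exact ⟨k, hk.prop.1, M, Function.injective_iff_pairwise_ne.2 (hM.mono fun _ _ h ↦ h.1),
    fun i ↦ (hMF i).1, hM.mono fun _ _ h ↦ h.2⟩

end Set

namespace IntermediateField

variable {K L : Type*} [Field K] [Field L] [Algebra K L]

theorem finrank_inf_lt_of_ne {E E' : IntermediateField K L} [FiniteDimensional K E]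
    [FiniteDimensional K E'] (hrank : finrank K E = finrank K E') (hne : E ≠ E') :
    finrank K ↥(E ⊓ E') < finrank K E := by
  have hlt : E ⊓ E' < E := inf_lt_left.2 fun hle ↦ hne (eq_of_le_of_finrank_eq hle hrank)
  exact (finrank_le_of_le_right hlt.le).lt_of_ne (mt (eq_of_le_of_finrank_eq hlt.le) hlt.ne)

theorem linearDisjoint_extendScalars_of_inf_eq {F A B : IntermediateField K L} (hA : F ≤ A)
    (hB : F ≤ B) [IsGalois K A] [FiniteDimensional K A] [FiniteDimensional K B]
    (h : A ⊓ B = F) : (extendScalars hA).LinearDisjoint (extendScalars hB) := by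
  have : IsGalois K (extendScalars hA) := ‹IsGalois K A›
  have : FiniteDimensional K (extendScalars hA) := ‹FiniteDimensional K A›
  have : FiniteDimensional K (extendScalars hB) := ‹FiniteDimensional K B›
  have : IsGalois F (extendScalars hA) := .tower_top_of_isGalois K F _
  have : FiniteDimensional F (extendScalars hA) := .right K F _
  have : FiniteDimensional F (extendScalars hB) := .right K F _
  subst h
  exact .of_inf_eq_bot (by rw [extendScalars_inf]; exact extendScalars_self _)

end IntermediateField

theorem exists_common_intersection_family_general
    (K L : Type*) [Field K] [Field L] [Algebra K L] (d : ℕ)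
    (hinf : {M : IntermediateField K L | FiniteDimensional K M ∧ Module.finrank K M = d ∧
      IsGalois K M}.Infinite)
    (hlt : {M : IntermediateField K L | FiniteDimensional K M ∧ Module.finrank K M < d ∧
      IsGalois K M}.Finite) :
    ∃ K₁ : IntermediateField K L, FiniteDimensional K K₁ ∧ IsGalois K K₁ ∧
      ∃ M : ℕ → IntermediateField K L, Function.Injective M ∧
        (∀ i, FiniteDimensional K (M i) ∧ Module.finrank K (M i) = d ∧ IsGalois K (M i)) ∧
        (∀ i j, i ≠ j → M i ⊓ M j = K₁) ∧
        ∃ hle : ∀ i, K₁ ≤ M i, ∀ i j, i ≠ j →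
          IntermediateField.LinearDisjoint
            (IntermediateField.extendScalars (hle i)) (IntermediateField.extendScalars (hle j)) := by
  have hinter : {M : IntermediateField K L | FiniteDimensional K M ∧ finrank K M = d ∧
      IsGalois K M}.Pairwise fun M₁ M₂ ↦ M₁ ⊓ M₂ ∈
        {M : IntermediateField K L | FiniteDimensional K M ∧ finrank K M < d ∧ IsGalois K M} := by
    rintro M₁ ⟨_, h₁, _⟩ M₂ ⟨_, h₂, _⟩ hne
    exact ⟨inferInstance, h₁ ▸ finrank_inf_lt_of_ne (h₁.trans h₂.symm) hne, inferInstance⟩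
  obtain ⟨K₁, ⟨hK₁, -, hK₁gal⟩, M, hMinj, hM, hMinf⟩ :=
    hinf.exists_seq_pairwise_inf_eq hlt hinter
  have hle (i : ℕ) : K₁ ≤ M i := hMinf (Nat.succ_ne_self i).symm ▸ inf_le_left
  refine ⟨K₁, hK₁, hK₁gal, M, hMinj, hM, fun i j hij ↦ hMinf hij, hle, fun i j hij ↦ ?_⟩
  obtain ⟨_, -, _⟩ := hM i
  obtain ⟨_, -, _⟩ := hM j
  exact linearDisjoint_extendScalars_of_inf_eq _ _ (hMinf hij)

/-- Let `L/K` be Galois, `d > 1` minimal such that there are infinitely many Galois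
subextensions of `L/K` of degree `d`, and suppose there are only finitely many Galois
subextensions of degree `< d`. Then there are a finite Galois subextension `K₁` of `L/K`
and an infinite family `(Mᵢ)` of Galois subextensions of degree `d` over `K` with
`Mᵢ ∩ Mⱼ = K₁` for `i ≠ j`; consequently the `Mᵢ` are pairwise linearly disjoint
over `K₁`. -/
theorem exists_common_intersection_family
    (K L : Type*) [Field K] [Field L] [Algebra K L] [IsGalois K L] (d : ℕ) (hd : 1 < d)
    (hinf : {M : IntermediateField K L | FiniteDimensional K M ∧ Module.finrank K M = d ∧
      IsGalois K M}.Infinite)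
    (hmin : ∀ d' : ℕ, 1 < d' → d' < d →
      {M : IntermediateField K L | FiniteDimensional K M ∧ Module.finrank K M = d' ∧
        IsGalois K M}.Finite)
    (hlt : {M : IntermediateField K L | FiniteDimensional K M ∧ Module.finrank K M < d ∧
      IsGalois K M}.Finite) :
    ∃ K₁ : IntermediateField K L, FiniteDimensional K K₁ ∧ IsGalois K K₁ ∧
      ∃ M : ℕ → IntermediateField K L, Function.Injective M ∧
        (∀ i, FiniteDimensional K (M i) ∧ Module.finrank K (M i) = d ∧ IsGalois K (M i)) ∧
        (∀ i j, i ≠ j → M i ⊓ M j = K₁) ∧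
        ∃ hle : ∀ i, K₁ ≤ M i, ∀ i j, i ≠ j →
          IntermediateField.LinearDisjoint
            (IntermediateField.extendScalars (hle i)) (IntermediateField.extendScalars (hle j)) :=
  exists_common_intersection_family_general K L d hinf hlt
end

section
/- Let G₁ and A be finite groups with a right action of G₁ on A by automorphisms, let G₂ be a finite group with |G₂| ≥ |A|, and set G = G₁ × G₂, identifying G₁ with G₁ × {1} ≤ G. Let I = Ind_{G₁}^G(A) be the group of G₁-invariant functions f : G → A (with f(στ) = f(σ)^τ for τ ∈ G₁), on which G acts by f^σ(τ) = f(στ), and let π : I → A be the evaluation f ↦ f(1). Then there exists ζ ∈ I such that for every g₁ ∈ G₁, the normal closure N of the element τ = (ζ, (g₁,1)) in the twisted wreath product A ≀_{G₁} G = I ⋊ G satisfies π(N ∩ I) = A. -/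
section TwistedWreath

variable (G₁ G₂ A : Type*) [Group G₁] [Group G₂] [Group A] (ρ : G₁ →* MulAut A)

/-- The group `Ind_{G₁}^G(A)` of `G₁`-invariant functions `f : G → A` for `G = G₁ × G₂`,
where `G₁` is identified with `G₁ × {1}`; the right action of `G₁` on `A` is
`a^τ = ρ τ⁻¹ a`, and the invariance condition reads `f(σ·(τ,1)) = f(σ)^τ`. -/
def Ind : Subgroup (G₁ × G₂ → A) where
  carrier := {f | ∀ (σ : G₁ × G₂) (τ : G₁), f (σ * (τ, 1)) = ρ τ⁻¹ (f σ)}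
  one_mem' := by intro σ τ; simp
  mul_mem' := by
    intro f g hf hg σ τ
    simp only [Pi.mul_apply, hf σ τ, hg σ τ, map_mul]
  inv_mem' := by
    intro f hf σ τ
    simp only [Pi.inv_apply, hf σ τ, map_inv]

/-- The action of `G = G₁ × G₂` on `Ind_{G₁}^G(A)`; the right action `f^σ(τ) = f(στ)`
of the paper corresponds to the left action `(σ • f)(τ) = f(σ⁻¹τ)` used here, so that
`f^σ = σ⁻¹ • f`. -/
def wreathAction : (G₁ × G₂) →* MulAut ↥(Ind G₁ G₂ A ρ) where
  toFun g :=
    { toFun := fun f => ⟨fun x => (f : G₁ × G₂ → A) (g⁻¹ * x), by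
        intro σ τ
        dsimp only
        rw [← mul_assoc]
        exact f.2 (g⁻¹ * σ) τ⟩
      invFun := fun f => ⟨fun x => (f : G₁ × G₂ → A) (g * x), by
        intro σ τ
        dsimp only
        rw [← mul_assoc]
        exact f.2 (g * σ) τ⟩
      left_inv := by intro f; ext x; simp
      right_inv := by intro f; ext x; simp
      map_mul' := by intro f g'; rfl }
  map_one' := by ext f x; simp
  map_mul' := by intro g g'; ext f x; simp [mul_assoc]

/-- The twisted wreath product `A ≀_{G₁} G = Ind_{G₁}^G(A) ⋊ G` for `G = G₁ × G₂`. -/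
abbrev TwistedWreath := ↥(Ind G₁ G₂ A ρ) ⋊[wreathAction G₁ G₂ A ρ] (G₁ × G₂)

/-- The evaluation map `π : Ind_{G₁}^G(A) → A`, `f ↦ f(1)`. -/
def evalHom : ↥(Ind G₁ G₂ A ρ) →* A :=
  (Pi.evalMonoidHom (fun _ : G₁ × G₂ => A) 1).comp (Ind G₁ G₂ A ρ).subtype

end TwistedWreath

/-!
Pick a surjection `h : G₂ → A` (possible since `|G₂| ≥ |A|`) and let `ζ` be the `G₁`-invariant
function with `ζ(σ₁, σ₂) = h(σ₂)^{σ₁}`. For `s ∈ G₂` the element `(1, s)` of `G` commutes with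
`(g₁, 1)`, so the commutator of `(1, s)` with `τ = (ζ, (g₁, 1))` lies in `Ind_{G₁}^G(A)`; it is
`ζ^{(1, s)⁻¹} ζ⁻¹` and evaluates at `1` to `h(s⁻¹) h(1)⁻¹`, which runs over all of `A`.
-/

namespace SemidirectProduct

variable {N G : Type*} [Group N] [Group G] {φ : G →* MulAut N}

theorem inr_mul_mul_inv_inr_mul_inv_of_commute {g : G} {n : N} {k : G} (hgk : Commute g k) :
    inr g * ⟨n, k⟩ * (inr g)⁻¹ * (⟨n, k⟩ : N ⋊[φ] G)⁻¹ = inl (φ g n * n⁻¹) := by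
  have hc : Commute (inr k) (inr g : N ⋊[φ] G)⁻¹ := (hgk.map inr).inv_left.symm
  rw [mk_eq_inl_mul_inr, map_mul, inl_aut]
  simp only [map_inv, mul_inv_rev, mul_assoc, hc.left_comm, mul_inv_cancel_left]

theorem inl_mul_inv_mem_normalClosure_of_commute {g : G} {n : N} {k : G} (hgk : Commute g k) :
    inl (φ g n * n⁻¹) ∈ Subgroup.normalClosure {(⟨n, k⟩ : N ⋊[φ] G)} := by
  have hmem := Subgroup.subset_normalClosure (Set.mem_singleton (⟨n, k⟩ : N ⋊[φ] G))
  rw [← inr_mul_mul_inv_inr_mul_inv_of_commute hgk]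
  exact mul_mem (Subgroup.normalClosure_normal.conj_mem _ hmem _) (inv_mem hmem)

end SemidirectProduct

section TwistedWreath

variable {G₁ G₂ A : Type*} [Group G₁] [Group G₂] [Group A] {ρ : G₁ →* MulAut A}

/-- The `G₁`-invariant function `G → A` that restricts to `h` on `{1} × G₂`. -/
def Ind.extend (ρ : G₁ →* MulAut A) (h : G₂ → A) : Ind G₁ G₂ A ρ :=
  ⟨fun σ => ρ σ.1⁻¹ (h σ.2), fun σ τ => by simp [mul_inv_rev, map_mul]⟩

theorem Ind.extend_apply_one_mk (h : G₂ → A) (s : G₂) :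
    (Ind.extend ρ h : G₁ × G₂ → A) (1, s) = h s := by
  simp only [Ind.extend, inv_one, map_one, MulAut.one_apply]

theorem evalHom_wreathAction_mul_inv (ζ : Ind G₁ G₂ A ρ) (g : G₁ × G₂) :
    evalHom G₁ G₂ A ρ (wreathAction G₁ G₂ A ρ g ζ * ζ⁻¹) =
      (ζ : G₁ × G₂ → A) g⁻¹ * ((ζ : G₁ × G₂ → A) 1)⁻¹ := by
  simp [evalHom, wreathAction]

end TwistedWreath

theorem exists_zeta_normal_closure_projects_onto_general
    (G₁ G₂ A : Type*) [Group G₁] [Group G₂] [Group A]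
    [Fintype G₂] [Fintype A] (ρ : G₁ →* MulAut A)
    (hcard : Fintype.card A ≤ Fintype.card G₂) :
    ∃ ζ : ↥(Ind G₁ G₂ A ρ), ∀ g₁ : G₁,
      Subgroup.map (evalHom G₁ G₂ A ρ)
        (Subgroup.comap (SemidirectProduct.inl : ↥(Ind G₁ G₂ A ρ) →* TwistedWreath G₁ G₂ A ρ)
          (Subgroup.normalClosure {(⟨ζ, (g₁, 1)⟩ : TwistedWreath G₁ G₂ A ρ)})) = ⊤ := by
  obtain ⟨e⟩ : Nonempty (A ↪ G₂) := Function.Embedding.nonempty_of_card_le hcard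
  have hsurj : Function.Surjective (Function.invFun e) := Function.invFun_surjective e.injective
  refine ⟨Ind.extend ρ (Function.invFun e), fun g₁ => (Subgroup.eq_top_iff' _).2 fun a => ?_⟩
  obtain ⟨s, hs⟩ := hsurj (a * Function.invFun e 1)
  have hcomm : Commute ((1 : G₁), s⁻¹) (g₁, 1) :=
    Commute.prod (Commute.one_left g₁) (Commute.one_right s⁻¹)
  refine ⟨_, SemidirectProduct.inl_mul_inv_mem_normalClosure_of_commute hcomm, ?_⟩
  rw [evalHom_wreathAction_mul_inv, Prod.inv_mk, inv_one, inv_inv, ← Prod.mk_one_one,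
    Ind.extend_apply_one_mk, Ind.extend_apply_one_mk, hs, mul_inv_cancel_right]

/-- Let `G₁` and `A` be finite groups with a right action of `G₁` on `A`, let `G₂` be a
finite group with `|G₂| ≥ |A|`, and `G = G₁ × G₂`. Then there exists `ζ ∈ Ind_{G₁}^G(A)`
such that for every `g₁ ∈ G₁` the normal closure `N` of `τ = (ζ, (g₁, 1))` in the
twisted wreath product `A ≀_{G₁} G` satisfies `π(N ∩ Ind_{G₁}^G(A)) = A`. -/
theorem exists_zeta_normal_closure_projects_onto
    (G₁ G₂ A : Type*) [Group G₁] [Group G₂] [Group A]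
    [Fintype G₁] [Fintype G₂] [Fintype A] (ρ : G₁ →* MulAut A)
    (hcard : Fintype.card A ≤ Fintype.card G₂) :
    ∃ ζ : ↥(Ind G₁ G₂ A ρ), ∀ g₁ : G₁,
      Subgroup.map (evalHom G₁ G₂ A ρ)
        (Subgroup.comap (SemidirectProduct.inl : ↥(Ind G₁ G₂ A ρ) →* TwistedWreath G₁ G₂ A ρ)
          (Subgroup.normalClosure {(⟨ζ, (g₁, 1)⟩ : TwistedWreath G₁ G₂ A ρ)})) = ⊤ :=
  exists_zeta_normal_closure_projects_onto_general G₁ G₂ A ρ hcard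
end

section
/- Suppose M̂/K₁ is a finite Galois extension whose Galois group is identified with the twisted wreath product A ≀_{G₁} G = I ⋊ G, and let π : I → A be evaluation at 1. Let E' be the intermediate field with Gal(M̂/E') = I, and let M be the field corresponding to ker(π). Let N ≤ A ≀_{G₁} G be a normal subgroup with π(N ∩ I) = A. If Q is a field with Gal(M̂/(M̂ ∩ Q)) = N, then Gal(M̂Q/MQ) ≅ N ∩ ker(π), Gal(M̂Q/E'Q) ≅ N ∩ I, and hence Gal(MQ/E'Q) ≅ (N ∩ I)/(N ∩ ker π) ≅ π(N ∩ I) = A. -/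
set_option synthInstance.maxHeartbeats 400000
set_option maxHeartbeats 1000000


open IntermediateField

/-- The subgroup of `Gal(M̂/K₁)` of automorphisms fixing pointwise the elements of `M̂`
that lie in the set `S ⊆ Ω` (e.g. the elements of an intermediate field). -/
def fixingIn {K₁ Ω : Type*} [Field K₁] [Field Ω] [Algebra K₁ Ω]
    (Mhat : IntermediateField K₁ Ω) (S : Set Ω) : Subgroup (↥Mhat ≃ₐ[K₁] ↥Mhat) where
  carrier := {g | ∀ x : ↥Mhat, (x : Ω) ∈ S → g x = x}
  one_mem' := fun _ _ => rfl
  mul_mem' := by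
    intro a b ha hb x hx
    simp [AlgEquiv.aut_mul, hb x hx, ha x hx]
  inv_mem' := by
    intro a ha x hx
    show a.symm x = x
    rw [AlgEquiv.symm_apply_eq, ha x hx]

section Aux

variable {K₁ Ω : Type*} [Field K₁] [Field Ω] [Algebra K₁ Ω]

theorem mem_fixingIn {Mhat : IntermediateField K₁ Ω} {S : Set Ω}
    {g : ↥Mhat ≃ₐ[K₁] ↥Mhat} :
    g ∈ fixingIn Mhat S ↔ ∀ x : ↥Mhat, (x : Ω) ∈ S → g x = x := Iff.rfl

/-- If a ring automorphism of (the subtype of) an intermediate field `L` (over any base `B`)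
fixes the elements of two intermediate fields `S` and `T` pointwise, then it fixes the
elements of `S ⊔ T` pointwise. -/
theorem fixes_sup {B : Type*} [Field B] [Algebra B Ω]
    {L : IntermediateField B Ω} {S T : IntermediateField K₁ Ω} (σ : ↥L ≃+* ↥L)
    (hSL : ∀ x ∈ S, x ∈ L) (hTL : ∀ x ∈ T, x ∈ L)
    (hS : ∀ (x : Ω) (hx : x ∈ S), σ ⟨x, hSL x hx⟩ = ⟨x, hSL x hx⟩)
    (hT : ∀ (x : Ω) (hx : x ∈ T), σ ⟨x, hTL x hx⟩ = ⟨x, hTL x hx⟩)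
    (halg : ∀ c : K₁, algebraMap K₁ Ω c ∈ T)
    (x : Ω) (hx : x ∈ S ⊔ T) (hxL : x ∈ L) : σ ⟨x, hxL⟩ = ⟨x, hxL⟩ := by
  let Fix : Subfield Ω :=
    { carrier := {y | ∃ h : y ∈ L, σ ⟨y, h⟩ = ⟨y, h⟩}
      one_mem' := ⟨L.one_mem, by
        rw [show (⟨1, L.one_mem⟩ : ↥L) = 1 from rfl, map_one]⟩
      mul_mem' := by
        rintro a b ⟨ha, fa⟩ ⟨hb, fb⟩
        exact ⟨mul_mem ha hb, by
          rw [show (⟨a * b, mul_mem ha hb⟩ : ↥L) = ⟨a, ha⟩ * ⟨b, hb⟩ from rfl, map_mul, fa, fb]⟩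
      zero_mem' := ⟨L.zero_mem, by
        rw [show (⟨0, L.zero_mem⟩ : ↥L) = 0 from rfl, map_zero]⟩
      add_mem' := by
        rintro a b ⟨ha, fa⟩ ⟨hb, fb⟩
        exact ⟨add_mem ha hb, by
          rw [show (⟨a + b, add_mem ha hb⟩ : ↥L) = ⟨a, ha⟩ + ⟨b, hb⟩ from rfl, map_add, fa, fb]⟩
      neg_mem' := by
        rintro a ⟨ha, fa⟩
        exact ⟨neg_mem ha, by
          rw [show (⟨-a, neg_mem ha⟩ : ↥L) = -(⟨a, ha⟩ : ↥L) from rfl, map_neg, fa]⟩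
      inv_mem' := by
        rintro a ⟨ha, fa⟩
        exact ⟨inv_mem ha, by
          rw [show (⟨a⁻¹, inv_mem ha⟩ : ↥L) = (⟨a, ha⟩ : ↥L)⁻¹ from rfl, map_inv₀, fa]⟩ }
  have halg' : ∀ c : K₁, algebraMap K₁ Ω c ∈ Fix := fun c => ⟨hTL _ (halg c), hT _ (halg c)⟩
  have hle : S ⊔ T ≤ Fix.toIntermediateField halg' :=
    sup_le (fun y hy => show ∃ h : y ∈ L, σ ⟨y, h⟩ = ⟨y, h⟩ from ⟨hSL y hy, hS y hy⟩)
      (fun y hy => show ∃ h : y ∈ L, σ ⟨y, h⟩ = ⟨y, h⟩ from ⟨hTL y hy, hT y hy⟩)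
  have hmem : ∃ h : x ∈ L, σ ⟨x, h⟩ = ⟨x, h⟩ := hle hx
  obtain ⟨h, hfix⟩ := hmem
  exact hfix

end Aux


section Main

variable {K₁ Ω : Type*} [Field K₁] [Field Ω] [Algebra K₁ Ω]
variable (Mhat Q : IntermediateField K₁ Ω) {E : IntermediateField K₁ Ω}

theorem memX (h : E ≤ Mhat ⊔ Q) {x : Ω} (hx : x ∈ Mhat ⊔ Q) : x ∈ extendScalars h :=
  (mem_extendScalars h).mpr hx

theorem mem_supL {x : Ω} (hx : x ∈ Mhat) : x ∈ Mhat ⊔ Q := SetLike.le_def.mp le_sup_left hx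

theorem mem_supR {x : Ω} (hx : x ∈ Q) : x ∈ Mhat ⊔ Q := SetLike.le_def.mp le_sup_right hx

theorem fixes_base (h : E ≤ Mhat ⊔ Q)
    (σ : ↥(extendScalars h) ≃ₐ[↥E] ↥(extendScalars h)) {x : Ω} (hx : x ∈ E) :
    σ ⟨x, memX Mhat Q h (h hx)⟩ = ⟨x, memX Mhat Q h (h hx)⟩ := by
  have h2 : algebraMap ↥E ↥(extendScalars h) ⟨x, hx⟩ = ⟨x, memX Mhat Q h (h hx)⟩ :=
    Subtype.ext rfl
  rw [← h2, σ.commutes]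

/-- Restriction of an automorphism of `M̂Q/E` to `M̂`, as an algebra hom to `Ω`. -/
def resAlgHom (h : E ≤ Mhat ⊔ Q)
    (σ : ↥(extendScalars h) ≃ₐ[↥E] ↥(extendScalars h)) : ↥Mhat →ₐ[K₁] Ω where
  toFun x := (σ ⟨x.1, memX Mhat Q h (mem_supL Mhat Q x.2)⟩ : Ω)
  map_one' := by
    show (σ ⟨((1 : ↥Mhat) : Ω), _⟩ : Ω) = 1
    have h1 : (⟨((1 : ↥Mhat) : Ω), memX Mhat Q h (mem_supL Mhat Q (1 : ↥Mhat).2)⟩ :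
        ↥(extendScalars h)) = 1 := Subtype.ext (by simp)
    rw [h1, map_one]
    simp
  map_mul' x y := by
    show (σ ⟨((x * y : ↥Mhat) : Ω), _⟩ : Ω) = (σ ⟨(x : Ω), _⟩ : Ω) * (σ ⟨(y : Ω), _⟩ : Ω)
    have h1 : (⟨((x * y : ↥Mhat) : Ω), memX Mhat Q h (mem_supL Mhat Q (x * y).2)⟩ :
        ↥(extendScalars h)) = ⟨(x : Ω), memX Mhat Q h (mem_supL Mhat Q x.2)⟩ *
          ⟨(y : Ω), memX Mhat Q h (mem_supL Mhat Q y.2)⟩ := Subtype.ext (by simp)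
    rw [h1, map_mul]
    simp
  map_zero' := by
    show (σ ⟨((0 : ↥Mhat) : Ω), _⟩ : Ω) = 0
    have h1 : (⟨((0 : ↥Mhat) : Ω), memX Mhat Q h (mem_supL Mhat Q (0 : ↥Mhat).2)⟩ :
        ↥(extendScalars h)) = 0 := Subtype.ext (by simp)
    rw [h1, map_zero]
    simp
  map_add' x y := by
    show (σ ⟨((x + y : ↥Mhat) : Ω), _⟩ : Ω) = (σ ⟨(x : Ω), _⟩ : Ω) + (σ ⟨(y : Ω), _⟩ : Ω)
    have h1 : (⟨((x + y : ↥Mhat) : Ω), memX Mhat Q h (mem_supL Mhat Q (x + y).2)⟩ :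
        ↥(extendScalars h)) = ⟨(x : Ω), memX Mhat Q h (mem_supL Mhat Q x.2)⟩ +
          ⟨(y : Ω), memX Mhat Q h (mem_supL Mhat Q y.2)⟩ := Subtype.ext (by simp)
    rw [h1, map_add]
    simp
  commutes' c := by
    have hc : algebraMap K₁ Ω c ∈ E := E.algebraMap_mem c
    show (σ ⟨((algebraMap K₁ ↥Mhat c : ↥Mhat) : Ω), _⟩ : Ω) = _
    have h1 : (⟨((algebraMap K₁ ↥Mhat c : ↥Mhat) : Ω),
        memX Mhat Q h (mem_supL Mhat Q (algebraMap K₁ ↥Mhat c).2)⟩ :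
        ↥(extendScalars h)) = ⟨algebraMap K₁ Ω c, memX Mhat Q h (h hc)⟩ :=
      Subtype.ext (by simp [IntermediateField.algebraMap_apply])
    rw [h1, fixes_base Mhat Q h σ hc]

theorem resAlgHom_mem [FiniteDimensional K₁ ↥Mhat] [IsGalois K₁ ↥Mhat] (h : E ≤ Mhat ⊔ Q)
    (σ : ↥(extendScalars h) ≃ₐ[↥E] ↥(extendScalars h)) (x : ↥Mhat) :
    resAlgHom Mhat Q h σ x ∈ Mhat := by
  have h1 := AlgHom.fieldRange_of_normal (E := Mhat) (resAlgHom Mhat Q h σ)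
  have h2 : resAlgHom Mhat Q h σ x ∈ (resAlgHom Mhat Q h σ).fieldRange := ⟨x, rfl⟩
  rwa [h1] at h2

variable [FiniteDimensional K₁ ↥Mhat] [IsGalois K₁ ↥Mhat]

/-- Restriction as an algebra hom `M̂ → M̂`. -/
def resAlgHom' (h : E ≤ Mhat ⊔ Q)
    (σ : ↥(extendScalars h) ≃ₐ[↥E] ↥(extendScalars h)) : ↥Mhat →ₐ[K₁] ↥Mhat where
  toFun x := ⟨resAlgHom Mhat Q h σ x, resAlgHom_mem Mhat Q h σ x⟩
  map_one' := Subtype.ext ((resAlgHom Mhat Q h σ).map_one')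
  map_mul' x y := Subtype.ext ((resAlgHom Mhat Q h σ).map_mul' x y)
  map_zero' := Subtype.ext ((resAlgHom Mhat Q h σ).map_zero')
  map_add' x y := Subtype.ext ((resAlgHom Mhat Q h σ).map_add' x y)
  commutes' c := Subtype.ext ((resAlgHom Mhat Q h σ).commutes' c)

/-- Restriction as an automorphism of `M̂`. -/
noncomputable def resAut (h : E ≤ Mhat ⊔ Q)
    (σ : ↥(extendScalars h) ≃ₐ[↥E] ↥(extendScalars h)) : ↥Mhat ≃ₐ[K₁] ↥Mhat :=
  AlgEquiv.ofBijective (resAlgHom' Mhat Q h σ) (resAlgHom' Mhat Q h σ).bijective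

theorem resAut_apply (h : E ≤ Mhat ⊔ Q)
    (σ : ↥(extendScalars h) ≃ₐ[↥E] ↥(extendScalars h)) (x : ↥Mhat) :
    (resAut Mhat Q h σ x : Ω) = (σ ⟨x.1, memX Mhat Q h (mem_supL Mhat Q x.2)⟩ : Ω) := rfl

/-- Restriction as a group homomorphism. -/
noncomputable def resHom (h : E ≤ Mhat ⊔ Q) :
    (↥(extendScalars h) ≃ₐ[↥E] ↥(extendScalars h)) →* (↥Mhat ≃ₐ[K₁] ↥Mhat) :=
  MonoidHom.mk' (resAut Mhat Q h) (fun σ τ => by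
    apply AlgEquiv.ext
    intro x
    apply Subtype.ext
    show (((σ * τ) ⟨x.1, _⟩ : ↥(extendScalars h)) : Ω) =
      (σ ⟨((τ ⟨x.1, _⟩ : ↥(extendScalars h)) : Ω), _⟩ : Ω)
    rw [show ((σ * τ) ⟨x.1, memX Mhat Q h (mem_supL Mhat Q x.2)⟩) =
      σ (τ ⟨x.1, memX Mhat Q h (mem_supL Mhat Q x.2)⟩) from rfl])

theorem resHom_injective (hQE : Q ≤ E) (h : E ≤ Mhat ⊔ Q) :
    Function.Injective (resHom Mhat Q h) := by
  rw [injective_iff_map_eq_one]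
  intro σ hσ
  have hfix : ∀ (x : Ω) (hx : x ∈ Mhat ⊔ E) (hxL : x ∈ extendScalars h),
      σ ⟨x, hxL⟩ = ⟨x, hxL⟩ := by
    refine fixes_sup (σ : ↥(extendScalars h) ≃+* ↥(extendScalars h))
      (fun y hy => memX Mhat Q h (mem_supL Mhat Q hy)) (fun y hy => memX Mhat Q h (h hy))
      ?_ (fun y hy => fixes_base Mhat Q h σ hy) (fun c => E.algebraMap_mem c)
    intro y hy
    apply Subtype.ext
    have h1 : resAut Mhat Q h σ = 1 := hσ
    have h2 := congrArg (fun g : ↥Mhat ≃ₐ[K₁] ↥Mhat => (g ⟨y, hy⟩ : Ω)) h1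
    simpa [resAut_apply] using h2
  apply AlgEquiv.ext
  intro x
  have hxE : x.1 ∈ Mhat ⊔ E := SetLike.le_def.mp (sup_le_sup_left hQE Mhat) x.2
  have := hfix x.1 hxE x.2
  simpa using this

end Main


section Main2

variable {K₁ Ω : Type*} [Field K₁] [Field Ω] [Algebra K₁ Ω]
variable (Mhat Q : IntermediateField K₁ Ω) {E : IntermediateField K₁ Ω}
variable [FiniteDimensional K₁ ↥Mhat] [IsGalois K₁ ↥Mhat]

theorem fd_and_galois (hQE : Q ≤ E) (h : E ≤ Mhat ⊔ Q) :
    FiniteDimensional ↥E ↥(extendScalars h) ∧ IsGalois ↥E ↥(extendScalars h) := by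
  obtain ⟨p, hpsep, hpsplit⟩ := IsGalois.is_separable_splitting_field K₁ ↥Mhat
  haveI := hpsplit
  set q : Polynomial ↥E := p.map (algebraMap K₁ ↥E) with hq
  have hroot : q.rootSet Ω = p.rootSet Ω := by
    ext x
    simp only [hq, Polynomial.mem_rootSet', Polynomial.map_map, Polynomial.aeval_map_algebraMap]
    rw [← IsScalarTower.algebraMap_eq]
  have hMhat : IntermediateField.adjoin K₁ (p.rootSet Ω) = Mhat := by
    apply IntermediateField.toSubalgebra_injective
    rw [IntermediateField.adjoin_toSubalgebra_of_isAlgebraic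
      (fun x hx => isAlgebraic_of_mem_rootSet hx)]
    rw [Polynomial.IsSplittingField.adjoin_rootSet_eq_range ↥Mhat p Mhat.val]
    exact Mhat.range_val
  have hsplits : (q.map (algebraMap ↥E ↥(extendScalars h))).Splits := by
    rw [hq, Polynomial.map_map]
    let j : ↥Mhat →+* ↥(extendScalars h) :=
      { toFun := fun x => ⟨x.1, memX Mhat Q h (mem_supL Mhat Q x.2)⟩
        map_one' := Subtype.ext rfl
        map_mul' := fun _ _ => Subtype.ext rfl
        map_zero' := Subtype.ext rfl
        map_add' := fun _ _ => Subtype.ext rfl }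
    have hcomp : (algebraMap ↥E ↥(extendScalars h)).comp (algebraMap K₁ ↥E) =
        j.comp (algebraMap K₁ ↥Mhat) := RingHom.ext fun c => Subtype.ext rfl
    rw [hcomp, ← Polynomial.map_map]
    exact (Polynomial.IsSplittingField.splits ↥Mhat p).map j
  have hadj : extendScalars h = IntermediateField.adjoin ↥E (q.rootSet Ω) := by
    rw [hroot]
    apply le_antisymm
    · rw [IntermediateField.extendScalars_le_iff]
      apply sup_le
      · rw [← hMhat, IntermediateField.adjoin_le_iff]
        intro x hx
        exact IntermediateField.subset_adjoin ↥E _ hx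
      · intro x hx
        have hxE : x ∈ E := hQE hx
        have hval : algebraMap ↥E Ω ⟨x, hxE⟩ = x := rfl
        exact hval ▸ (IntermediateField.adjoin ↥E (p.rootSet Ω)).algebraMap_mem ⟨x, hxE⟩
    · rw [IntermediateField.adjoin_le_iff]
      intro x hx
      have hxM : x ∈ Mhat := hMhat ▸ IntermediateField.subset_adjoin K₁ _ hx
      exact memX Mhat Q h (mem_supL Mhat Q hxM)
  have hsf : q.IsSplittingField ↥E ↥(extendScalars h) :=
    (IntermediateField.isSplittingField_iff (K := ↥E) (L := Ω)).mpr ⟨hsplits, hadj⟩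
  haveI := hsf
  have fd : FiniteDimensional ↥E ↥(extendScalars h) :=
    Polynomial.IsSplittingField.finiteDimensional _ q
  exact ⟨fd, IsGalois.of_separable_splitting_field (p := q) (hpsep.map)⟩

theorem range_resHom (hQE : Q ≤ E) (h : E ≤ Mhat ⊔ Q) :
    (resHom Mhat Q h).range = fixingIn Mhat (E : Set Ω) := by
  obtain ⟨fd, gal⟩ := fd_and_galois Mhat Q hQE h
  haveI := fd; haveI := gal
  have hkey : fixingIn Mhat (E : Set Ω) = (IntermediateField.comap Mhat.val E).fixingSubgroup := by
    ext g
    rw [IntermediateField.mem_fixingSubgroup_iff]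
    exact ⟨fun hg y hy => hg y hy, fun hg x hx => hg x hx⟩
  rw [hkey]
  apply le_antisymm
  · rintro g ⟨σ, rfl⟩
    rw [IntermediateField.mem_fixingSubgroup_iff]
    intro y hy
    apply Subtype.ext
    have hy' : (y : Ω) ∈ E := hy
    show ((resAut Mhat Q h σ) y : Ω) = y.1
    rw [resAut_apply]
    exact congrArg Subtype.val (fixes_base Mhat Q h σ hy')
  · have hle : IntermediateField.fixedField (resHom Mhat Q h).range ≤
        IntermediateField.comap Mhat.val E := by
      intro x hx
      have hbot : IntermediateField.fixedField
          (⊤ : Subgroup (↥(extendScalars h) ≃ₐ[↥E] ↥(extendScalars h))) = ⊥ := by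
        rw [← IntermediateField.fixingSubgroup_bot (F := ↥E) (E := ↥(extendScalars h))]
        exact IsGalois.fixedField_fixingSubgroup ⊥
      have hx' : (⟨x.1, memX Mhat Q h (mem_supL Mhat Q x.2)⟩ : ↥(extendScalars h)) ∈
          IntermediateField.fixedField
            (⊤ : Subgroup (↥(extendScalars h) ≃ₐ[↥E] ↥(extendScalars h))) := by
        intro σ'
        have hgmem : resAut Mhat Q h σ'.1 ∈ (resHom Mhat Q h).range := ⟨σ'.1, rfl⟩
        have h2 : (⟨resAut Mhat Q h σ'.1, hgmem⟩ : ↥(resHom Mhat Q h).range) • x = x := hx _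
        have h3 : (resAut Mhat Q h σ'.1) x = x := h2
        apply Subtype.ext
        have h4 := congrArg Subtype.val h3
        rw [resAut_apply] at h4
        exact h4
      rw [hbot, IntermediateField.mem_bot] at hx'
      obtain ⟨c, hc⟩ := hx'
      show x.1 ∈ E
      have hcv : (c : Ω) = x.1 := congrArg Subtype.val hc
      exact hcv ▸ c.2
    calc (IntermediateField.comap Mhat.val E).fixingSubgroup
        ≤ (IntermediateField.fixedField (resHom Mhat Q h).range).fixingSubgroup := by
          intro g hg
          rw [IntermediateField.mem_fixingSubgroup_iff] at hg ⊢
          intro y hy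
          exact hg y (hle hy)
      _ = (resHom Mhat Q h).range :=
          IntermediateField.fixingSubgroup_fixedField (resHom Mhat Q h).range

theorem fixingIn_sup {F : IntermediateField K₁ Ω} (hF : F ≤ Mhat) :
    fixingIn Mhat ((F ⊔ Q : IntermediateField K₁ Ω) : Set Ω) =
      fixingIn Mhat (F : Set Ω) ⊓ fixingIn Mhat (Q : Set Ω) := by
  apply le_antisymm
  · intro g hg
    exact ⟨fun x hx => hg x (mem_supL F Q hx), fun x hx => hg x (mem_supR F Q hx)⟩
  · rintro g ⟨hgF, hgQ⟩
    have hg' : g ∈ (resHom Mhat Q (le_sup_right : Q ≤ Mhat ⊔ Q)).range := by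
      rw [range_resHom Mhat Q le_rfl le_sup_right]
      exact hgQ
    obtain ⟨σ, rfl⟩ := hg'
    intro x hx
    apply Subtype.ext
    show ((resAut Mhat Q le_sup_right σ) x : Ω) = x.1
    rw [resAut_apply]
    have hS : ∀ (y : Ω) (hy : y ∈ F),
        σ ⟨y, memX Mhat Q le_sup_right (mem_supL Mhat Q (hF hy))⟩ =
          ⟨y, memX Mhat Q le_sup_right (mem_supL Mhat Q (hF hy))⟩ := by
      intro y hy
      apply Subtype.ext
      have h1 := congrArg Subtype.val (hgF ⟨y, hF hy⟩ hy)
      exact h1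
    have hfix := fixes_sup (σ : ↥(extendScalars (le_sup_right : Q ≤ Mhat ⊔ Q)) ≃+*
        ↥(extendScalars (le_sup_right : Q ≤ Mhat ⊔ Q)))
      (fun y hy => memX Mhat Q le_sup_right (mem_supL Mhat Q (hF hy)))
      (fun y hy => memX Mhat Q le_sup_right (mem_supR Mhat Q hy))
      hS (fun y hy => fixes_base Mhat Q le_sup_right σ hy) (fun c => Q.algebraMap_mem c)
      x.1 hx (memX Mhat Q le_sup_right (mem_supL Mhat Q x.2))
    exact congrArg Subtype.val hfix

end Main2


/-- Let `M̂/K₁` be a finite Galois extension whose Galois group is identified (via `θ`)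
with a group `W` (in the application, the twisted wreath product `A ≀_{G₁} G = I ⋊ G`),
let `I ≤ W` correspond to `Gal(M̂/E')`, let `π : I → A` be a homomorphism (evaluation at
`1`) with `ker π` corresponding to `Gal(M̂/M)`, and let `N` be a normal subgroup of `W`
with `π(N ∩ I) = A`. If `Q` is an extension of `K₁` (in a common field `Ω`) such that
`Gal(M̂/(M̂ ∩ Q))` corresponds to `N`, then `Gal(M̂Q/MQ) ≅ N ∩ ker π`,
`Gal(M̂Q/E'Q) ≅ N ∩ I`, and hence `Gal(MQ/E'Q) ≅ (N ∩ I)/(N ∩ ker π) ≅ π(N ∩ I) = A`. -/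
theorem galois_groups_of_compositum
    (K₁ Ω : Type*) [Field K₁] [Field Ω] [Algebra K₁ Ω]
    (Mhat Mf E' Q : IntermediateField K₁ Ω)
    [FiniteDimensional K₁ Mhat] [IsGalois K₁ Mhat]
    (hE'M : E' ≤ Mf) (hMMhat : Mf ≤ Mhat)
    (W : Type*) [Group W] [Fintype W] (I : Subgroup W)
    (A : Type*) [Group A] [Fintype A] (πh : ↥I →* A)
    (θ : (↥Mhat ≃ₐ[K₁] ↥Mhat) ≃* W)
    (hI : Subgroup.map θ.toMonoidHom (fixingIn Mhat ↑E') = I)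
    (hM : Subgroup.map θ.toMonoidHom (fixingIn Mhat ↑Mf) = Subgroup.map I.subtype πh.ker)
    (N : Subgroup W) [N.Normal]
    (hπN : Subgroup.map πh (Subgroup.comap I.subtype N) = ⊤)
    (hQ : Subgroup.map θ.toMonoidHom (fixingIn Mhat ↑Q) = N)
    (h1 : Mf ⊔ Q ≤ Mhat ⊔ Q) (h2 : E' ⊔ Q ≤ Mhat ⊔ Q) (h3 : E' ⊔ Q ≤ Mf ⊔ Q) :
    Nonempty ((↥(IntermediateField.extendScalars h1) ≃ₐ[↥(Mf ⊔ Q)]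
          ↥(IntermediateField.extendScalars h1)) ≃*
        ↥(N ⊓ Subgroup.map I.subtype πh.ker)) ∧
      Nonempty ((↥(IntermediateField.extendScalars h2) ≃ₐ[↥(E' ⊔ Q)]
            ↥(IntermediateField.extendScalars h2)) ≃* ↥(N ⊓ I)) ∧
      Nonempty ((↥(IntermediateField.extendScalars h3) ≃ₐ[↥(E' ⊔ Q)]
            ↥(IntermediateField.extendScalars h3)) ≃* A) := by
  have hEM : E' ≤ Mhat := hE'M.trans hMMhat
  refine ⟨?_, ?_, ?_⟩
  · -- Gal(M̂Q/MQ) ≅ N ∩ ker π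
    refine ⟨(((MonoidHom.ofInjective (resHom_injective Mhat Q le_sup_right h1)).trans
      (MulEquiv.subgroupCongr (by
        rw [range_resHom Mhat Q le_sup_right h1, fixingIn_sup Mhat Q hMMhat]))).trans
      ((Subgroup.equivMapOfInjective _ θ.toMonoidHom θ.injective).trans
        (MulEquiv.subgroupCongr (by
          rw [Subgroup.map_inf _ _ θ.toMonoidHom θ.injective, hM, hQ, inf_comm]))))⟩
  · -- Gal(M̂Q/E'Q) ≅ N ∩ I
    refine ⟨(((MonoidHom.ofInjective (resHom_injective Mhat Q le_sup_right h2)).trans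
      (MulEquiv.subgroupCongr (by
        rw [range_resHom Mhat Q le_sup_right h2, fixingIn_sup Mhat Q hEM]))).trans
      ((Subgroup.equivMapOfInjective _ θ.toMonoidHom θ.injective).trans
        (MulEquiv.subgroupCongr (by
          rw [Subgroup.map_inf _ _ θ.toMonoidHom θ.injective, hI, hQ, inf_comm]))))⟩
  · -- Gal(MQ/E'Q) ≅ A
    obtain ⟨fd2, gal2⟩ := fd_and_galois Mhat Q (le_sup_right : Q ≤ E' ⊔ Q) h2
    haveI := fd2; haveI := gal2
    set r := resHom Mhat Q h2 with hr
    have hrange : r.range = fixingIn Mhat (E' : Set Ω) ⊓ fixingIn Mhat (Q : Set Ω) := by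
      rw [hr, range_resHom Mhat Q le_sup_right h2, fixingIn_sup Mhat Q hEM]
    have hmemI : ∀ σ, θ (r σ) ∈ I := by
      intro σ
      have hσr : r σ ∈ r.range := ⟨σ, rfl⟩
      rw [hrange] at hσr
      rw [← hI]
      exact Subgroup.mem_map_of_mem θ.toMonoidHom hσr.1
    let ψ : (↥(IntermediateField.extendScalars h2) ≃ₐ[↥(E' ⊔ Q)]
        ↥(IntermediateField.extendScalars h2)) →* A :=
      MonoidHom.mk' (fun σ => πh ⟨θ (r σ), hmemI σ⟩) (by
        intro σ τ
        have hstep : (⟨θ (r (σ * τ)), hmemI (σ * τ)⟩ : ↥I) =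
            ⟨θ (r σ), hmemI σ⟩ * ⟨θ (r τ), hmemI τ⟩ :=
          Subtype.ext (show θ (r (σ * τ)) = θ (r σ) * θ (r τ) by rw [map_mul, map_mul])
        show πh ⟨θ (r (σ * τ)), hmemI (σ * τ)⟩ = πh ⟨θ (r σ), hmemI σ⟩ * πh ⟨θ (r τ), hmemI τ⟩
        rw [hstep, map_mul])
    have hsurj : Function.Surjective ψ := by
      intro a
      have ha : a ∈ (⊤ : Subgroup A) := trivial
      rw [← hπN] at ha
      obtain ⟨y, hyN, hya⟩ := ha
      have hy2 : (y : W) ∈ Subgroup.map θ.toMonoidHom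
          (fixingIn Mhat (E' : Set Ω) ⊓ fixingIn Mhat (Q : Set Ω)) := by
        rw [Subgroup.map_inf _ _ θ.toMonoidHom θ.injective, hI, hQ]
        exact ⟨y.2, hyN⟩
      obtain ⟨g, hg, hgy⟩ := hy2
      rw [← hrange] at hg
      obtain ⟨σ, rfl⟩ := hg
      refine ⟨σ, ?_⟩
      show πh ⟨θ (r σ), hmemI σ⟩ = a
      rw [← hya]
      congr 1
      exact Subtype.ext hgy
    have hMfQle : (E' ⊔ Q : IntermediateField K₁ Ω) ≤ Mf ⊔ Q := sup_le_sup_right hE'M Q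
    let Tsub : Subfield ↥(IntermediateField.extendScalars h2) :=
      { carrier := {x | (x : Ω) ∈ Mf ⊔ Q}
        one_mem' := by
          show ((1 : ↥(IntermediateField.extendScalars h2)) : Ω) ∈ Mf ⊔ Q
          rw [OneMemClass.coe_one]
          exact one_mem _
        mul_mem' := by
          intro a b ha hb
          show ((a * b : ↥(IntermediateField.extendScalars h2)) : Ω) ∈ Mf ⊔ Q
          rw [MulMemClass.coe_mul]
          exact mul_mem ha hb
        zero_mem' := by
          show ((0 : ↥(IntermediateField.extendScalars h2)) : Ω) ∈ Mf ⊔ Q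
          rw [ZeroMemClass.coe_zero]
          exact zero_mem _
        add_mem' := by
          intro a b ha hb
          show ((a + b : ↥(IntermediateField.extendScalars h2)) : Ω) ∈ Mf ⊔ Q
          rw [AddMemClass.coe_add]
          exact add_mem ha hb
        neg_mem' := by
          intro a ha
          show ((-a : ↥(IntermediateField.extendScalars h2)) : Ω) ∈ Mf ⊔ Q
          rw [NegMemClass.coe_neg]
          exact neg_mem ha
        inv_mem' := by
          intro a ha
          show ((a⁻¹ : ↥(IntermediateField.extendScalars h2)) : Ω) ∈ Mf ⊔ Q
          rw [IntermediateField.coe_inv]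
          exact inv_mem ha }
    let T : IntermediateField ↥(E' ⊔ Q) ↥(IntermediateField.extendScalars h2) :=
      Tsub.toIntermediateField (fun c => by
        show ((algebraMap ↥(E' ⊔ Q) ↥(IntermediateField.extendScalars h2) c :
          ↥(IntermediateField.extendScalars h2)) : Ω) ∈ Mf ⊔ Q
        exact SetLike.le_def.mp hMfQle c.2)
    have hker : ψ.ker = T.fixingSubgroup := by
      ext σ
      have step1 : ψ σ = 1 ↔ θ (r σ) ∈ Subgroup.map I.subtype πh.ker := by
        constructor
        · intro hψ
          exact ⟨⟨θ (r σ), hmemI σ⟩, hψ, rfl⟩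
        · rintro ⟨z, hz, hzeq⟩
          have hzz : (⟨θ (r σ), hmemI σ⟩ : ↥I) = z := Subtype.ext hzeq.symm
          show πh ⟨θ (r σ), hmemI σ⟩ = 1
          rw [hzz]
          exact hz
      have step2 : θ (r σ) ∈ Subgroup.map I.subtype πh.ker ↔
          r σ ∈ fixingIn Mhat (Mf : Set Ω) := by
        rw [← hM]
        constructor
        · rintro ⟨g, hg, hgeq⟩
          have hgr : g = r σ := θ.injective hgeq
          exact hgr ▸ hg
        · intro hg
          exact Subgroup.mem_map_of_mem θ.toMonoidHom hg
      have step3 : r σ ∈ fixingIn Mhat (Mf : Set Ω) ↔ σ ∈ T.fixingSubgroup := by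
        constructor
        · intro hfix
          rw [IntermediateField.mem_fixingSubgroup_iff]
          intro y hy
          have hyT : (y : Ω) ∈ Mf ⊔ Q := hy
          have hS : ∀ (z : Ω) (hz : z ∈ Mf),
              σ ⟨z, memX Mhat Q h2 (mem_supL Mhat Q (hMMhat hz))⟩ =
                ⟨z, memX Mhat Q h2 (mem_supL Mhat Q (hMMhat hz))⟩ := by
            intro z hz
            apply Subtype.ext
            have hh := congrArg Subtype.val (hfix ⟨z, hMMhat hz⟩ hz)
            exact hh
          have hfix2 := fixes_sup
            (σ : ↥(IntermediateField.extendScalars h2) ≃+* ↥(IntermediateField.extendScalars h2))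
            (fun z hz => memX Mhat Q h2 (mem_supL Mhat Q (hMMhat hz)))
            (fun z hz => memX Mhat Q h2 (h2 (SetLike.le_def.mp le_sup_right hz)))
            hS
            (fun z hz => fixes_base Mhat Q h2 σ (SetLike.le_def.mp le_sup_right hz))
            (fun c => Q.algebraMap_mem c) (y : Ω) hyT y.2
          exact hfix2
        · intro hfixT
          intro x hx
          apply Subtype.ext
          rw [IntermediateField.mem_fixingSubgroup_iff] at hfixT
          have hmem : (⟨x.1, memX Mhat Q h2 (mem_supL Mhat Q x.2)⟩ :
              ↥(IntermediateField.extendScalars h2)) ∈ T := mem_supL Mf Q hx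
          have hh := congrArg Subtype.val (hfixT _ hmem)
          exact hh
      rw [MonoidHom.mem_ker, step1, step2, step3]
    haveI hTnormal : T.fixingSubgroup.Normal := hker ▸ (MonoidHom.normal_ker ψ)
    let e : ↥T ≃ₐ[↥(E' ⊔ Q)] ↥(IntermediateField.extendScalars h3) :=
      { toFun := fun y => ⟨(y.1 : Ω), y.2⟩
        invFun := fun z => ⟨⟨z.1, SetLike.le_def.mp h1 z.2⟩, z.2⟩
        left_inv := fun y => Subtype.ext (Subtype.ext rfl)
        right_inv := fun z => Subtype.ext rfl
        map_mul' := fun x y => Subtype.ext rfl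
        map_add' := fun x y => Subtype.ext rfl
        commutes' := fun c => Subtype.ext rfl }
    exact ⟨(AlgEquiv.autCongr e.symm).trans <|
      (AlgEquiv.autCongr (IntermediateField.equivOfEq
        (IsGalois.fixedField_fixingSubgroup T).symm)).trans <|
      (IsGalois.normalAutEquivQuotient T.fixingSubgroup).symm.trans <|
      (QuotientGroup.quotientMulEquivOfEq hker.symm).trans
        (QuotientGroup.quotientKerEquivOfSurjective ψ hsurj)⟩
end
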